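/- arXiv:2309.07306 — 6 statements merged into one kernel-verified Lean document; each statement's English description precedes it below -/
import Mathlib

section
/- Suppose a sequence of finitely supported probability distributions (μᵢ)_{i=0}^∞ on a set X converges in the sup-norm metric to a distribution μ. Then there exist a sequence of distributions (μ′ᵢ)_{i=0}^∞ in Distr(X) and a sequence of reals (rᵢ)_{i=0}^∞ in [0,1] such that μᵢ = (1 − rᵢ)·μ ⊕ rᵢ·μ′ᵢ (i.e., μᵢ(x) = (1−rᵢ)μ(x) + rᵢμ′ᵢ(x) for all x) for every i ∈ ℕ, and lim_{i→∞} rᵢ = 0. -/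
/-!
Let `rᵢ` be the least weight with `(1 - rᵢ) μ ≤ μᵢ`, namely the maximum of `(1 - μᵢ x / μ x)⁺`
over the finite support of `μ`. Since `μᵢ → μ` pointwise on that finite set, `rᵢ → 0`. The
remainder `μᵢ - (1 - rᵢ) μ` is nonnegative of total mass `rᵢ`, so rescaling it by `1 / rᵢ` gives
`μ′ᵢ`; when `rᵢ = 0` we have `μ ≤ μᵢ` with equal masses, hence `μᵢ = μ`.
-/

/-- A finitely supported probability distribution on `X`. -/
def IsDistr {X : Type*} (μ : X → ℝ) : Prop :=
  (∀ x, 0 ≤ μ x) ∧ (Function.support μ).Finite ∧ ∑ᶠ x, μ x = 1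

/-- Convergence in the sup-norm (Chebyshev) metric, stated as uniform convergence. -/
def UConv {X : Type*} (μs : ℕ → X → ℝ) (μ : X → ℝ) : Prop :=
  ∀ ε > 0, ∃ N, ∀ i ≥ N, ∀ x, |μs i x - μ x| < ε

open Filter Topology NNReal Function

namespace IsDistr

variable {X : Type*} {μ ν : X → ℝ}

lemma eq_of_le (hμ : IsDistr μ) (hν : IsDistr ν) (hle : ∀ x, μ x ≤ ν x) : μ = ν := by
  by_contra hne
  obtain ⟨x, hx⟩ : ∃ x, μ x < ν x := by
    by_contra! h
    exact hne (funext fun x => (hle x).antisymm (h x))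
  have hpos : 0 < ∑ᶠ x, (ν x - μ x) :=
    finsum_pos (fun x => sub_nonneg.2 (hle x)) ⟨x, sub_pos.2 hx⟩
      ((hν.2.1.union hμ.2.1).subset (support_sub ν μ))
  rw [finsum_sub_distrib hν.2.1 hμ.2.1, hν.2.2, hμ.2.2, sub_self] at hpos
  exact hpos.false

lemma exists_eq_mix (hμ : IsDistr μ) (hν : IsDistr ν) {r : ℝ} (hr : 0 ≤ r)
    (hle : ∀ x, (1 - r) * μ x ≤ ν x) :
    ∃ ν' : X → ℝ, IsDistr ν' ∧ ∀ x, ν x = (1 - r) * μ x + r * ν' x := by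
  rcases hr.eq_or_lt with rfl | hr
  · refine ⟨μ, hμ, fun x => ?_⟩
    rw [← hμ.eq_of_le hν (by simpa using hle)]
    ring
  have hμ' : HasFiniteSupport fun x => (1 - r) * μ x :=
    hμ.2.1.subset (support_mul_subset_right _ _)
  have hfin : HasFiniteSupport fun x => (ν x - (1 - r) * μ x) / r :=
    ((hν.2.1.union hμ').subset (support_sub _ _)).subset
      ((support_div _ _).trans_subset Set.inter_subset_left)
  refine ⟨fun x => (ν x - (1 - r) * μ x) / r,
    ⟨fun x => div_nonneg (sub_nonneg.2 (hle x)) hr.le, hfin, ?_⟩, fun x => by field_simp; ring⟩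
  simp_rw [div_eq_mul_inv]
  rw [← finsum_mul, finsum_sub_distrib hν.2.1 hμ', ← mul_finsum, hν.2.2, hμ.2.2]
  field_simp
  ring

end IsDistr

lemma UConv.tendsto_apply {X : Type*} {μs : ℕ → X → ℝ} {μ : X → ℝ} (h : UConv μs μ) (x : X) :
    Tendsto (fun i => μs i x) atTop (𝓝 (μ x)) :=
  Metric.tendsto_atTop.2 fun ε hε => (h ε hε).imp fun _ hN i hi => by
    simpa only [Real.dist_eq] using hN i hi x

section mixWeight

variable {X : Type*} {s : Finset X} {μ ν : X → ℝ}

/-- When `μ > 0` on `s`, the least `r ≥ 0` with `(1 - r) * μ ≤ ν` on `s`. -/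
noncomputable def mixWeight (s : Finset X) (μ ν : X → ℝ) : ℝ≥0 :=
  s.sup fun x => (1 - ν x / μ x).toNNReal

lemma mixWeight_le_one (hμ : ∀ x, 0 ≤ μ x) (hν : ∀ x, 0 ≤ ν x) : (mixWeight s μ ν : ℝ) ≤ 1 :=
  NNReal.coe_le_one.2 <| Finset.sup_le fun x _ =>
    Real.toNNReal_le_one.2 (sub_le_self _ (div_nonneg (hν x) (hμ x)))

lemma one_sub_mixWeight_mul_le (hs : support μ ⊆ s) (hμ : ∀ x, 0 ≤ μ x) (hν : ∀ x, 0 ≤ ν x)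
    (x : X) : (1 - mixWeight s μ ν) * μ x ≤ ν x := by
  rcases (hμ x).eq_or_lt with hx | hx
  · simpa [← hx] using hν x
  have hxs : x ∈ s := hs hx.ne'
  have hr : 1 - ν x / μ x ≤ mixWeight s μ ν :=
    (Real.le_coe_toNNReal _).trans (NNReal.coe_le_coe.2 (Finset.le_sup (f := fun x =>
      (1 - ν x / μ x).toNNReal) hxs))
  calc (1 - mixWeight s μ ν) * μ x ≤ ν x / μ x * μ x := by gcongr; linarith
    _ = ν x := div_mul_cancel₀ _ hx.ne'

lemma tendsto_mixWeight {ι : Type*} {l : Filter ι} {νs : ι → X → ℝ} (hs : ∀ x ∈ s, μ x ≠ 0)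
    (h : ∀ x ∈ s, Tendsto (fun i => νs i x) l (𝓝 (μ x))) :
    Tendsto (fun i => mixWeight s μ (νs i)) l (𝓝 0) := by
  have := Tendsto.finset_sup_nhds_apply (s := s) (g := fun _ => ⊥) fun x hx => by
    rw [bot_eq_zero]
    have := (continuous_real_toNNReal.tendsto _).comp (((h x hx).div_const (μ x)).const_sub 1)
    simpa [div_self (hs x hx)] using this
  rwa [Finset.sup_bot] at this

end mixWeight

/-- representation of the limit: if `μᵢ → μ` in sup-norm, then there
are distributions `μ′ᵢ` and reals `rᵢ ∈ [0,1]` with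
`μᵢ = (1 − rᵢ)·μ ⊕ rᵢ·μ′ᵢ` pointwise for every `i`, and `rᵢ → 0`. -/
theorem representation_of_limit {X : Type*} (μs : ℕ → X → ℝ) (μ : X → ℝ)
    (hμs : ∀ i, IsDistr (μs i)) (hμ : IsDistr μ) (hconv : UConv μs μ) :
    ∃ (μ' : ℕ → X → ℝ) (r : ℕ → ℝ),
      (∀ i, IsDistr (μ' i)) ∧ (∀ i, 0 ≤ r i ∧ r i ≤ 1) ∧
      (∀ i x, μs i x = (1 - r i) * μ x + r i * μ' i x) ∧
      Filter.Tendsto r Filter.atTop (nhds 0) := by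
  set s := hμ.2.1.toFinset
  set r : ℕ → ℝ≥0 := fun i => mixWeight s μ (μs i)
  have hdom : ∀ i x, (1 - r i) * μ x ≤ μs i x := fun i =>
    one_sub_mixWeight_mul_le (by simp [s]) hμ.1 (hμs i).1
  choose μ' hμ' hmix using fun i => hμ.exists_eq_mix (hμs i) (r i).coe_nonneg (hdom i)
  refine ⟨μ', fun i => r i, hμ', fun i => ⟨(r i).coe_nonneg, mixWeight_le_one hμ.1 (hμs i).1⟩,
    hmix, ?_⟩
  simpa using NNReal.tendsto_coe.2 <| tendsto_mixWeight (fun x hx => hμ.2.1.mem_toFinset.1 hx)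
    fun x _ => hconv.tendsto_apply x
end

section
/- Let I and J be finite index sets, pᵢ, qⱼ ∈ [0,1] with ∑_{i∈I} pᵢ = 1 = ∑_{j∈J} qⱼ, and let μᵢ, νⱼ be finitely supported probability distributions on a set X such that ⊕_{i∈I} pᵢ·μᵢ = ⊕_{j∈J} qⱼ·νⱼ (pointwise equal mixtures). Then there exist reals r_{ij} ≥ 0 and distributions ϱ_{ij} ∈ Distr(X) such that for all i ∈ I: ∑_{j∈J} r_{ij} = pᵢ and pᵢ·μᵢ = ⊕_{j∈J} r_{ij}·ϱ_{ij} (pointwise), and for all j ∈ J: ∑_{i∈I} r_{ij} = qⱼ and qⱼ·νⱼ = ⊕_{i∈I} r_{ij}·ϱ_{ij}. -/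
open Finset

section ProductCoupling

variable {I J : Type*} [Fintype I] (a : I → ℝ) (b : J → ℝ)

noncomputable def productCoupling (i : I) (j : J) : ℝ :=
  a i * b j / ∑ k, a k

variable {a b}

theorem productCoupling_nonneg (ha : ∀ i, 0 ≤ a i) (hb : ∀ j, 0 ≤ b j) (i : I) (j : J) :
    0 ≤ productCoupling a b i j :=
  div_nonneg (mul_nonneg (ha i) (hb j)) (sum_nonneg fun k _ => ha k)

variable [Fintype J]

theorem sum_productCoupling_right (ha : ∀ i, 0 ≤ a i) (hab : ∑ i, a i = ∑ j, b j) (i : I) :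
    ∑ j, productCoupling a b i j = a i := by
  by_cases h : ∑ k, a k = 0
  · simp only [productCoupling, h, div_zero, sum_const_zero]
    exact ((sum_eq_zero_iff_of_nonneg fun k _ => ha k).1 h i (mem_univ i)).symm
  · simp only [productCoupling]
    rw [← sum_div, ← mul_sum, ← hab, mul_div_cancel_right₀ _ h]

theorem sum_productCoupling_left (hb : ∀ j, 0 ≤ b j) (hab : ∑ i, a i = ∑ j, b j) (j : J) :
    ∑ i, productCoupling a b i j = b j := by
  by_cases h : ∑ k, a k = 0
  · simp only [productCoupling, h, div_zero, sum_const_zero]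
    exact ((sum_eq_zero_iff_of_nonneg fun k _ => hb k).1 (hab ▸ h) j (mem_univ j)).symm
  · simp only [productCoupling]
    rw [← sum_div, ← sum_mul, mul_div_cancel_left₀ _ h]

end ProductCoupling

section Distr

variable {X : Type*}

theorem exists_isDistr_eq_finsum_mul {g : X → ℝ} (hg : ∀ x, 0 ≤ g x)
    (hfin : (Function.support g).Finite) {μ : X → ℝ} (hμ : IsDistr μ) :
    ∃ ρ, IsDistr ρ ∧ ∀ x, g x = (∑ᶠ y, g y) * ρ x := by
  by_cases h : ∑ᶠ y, g y = 0
  · have hg0 : ∀ x, g x = 0 := fun x => by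
      rw [finsum_eq_sum _ hfin] at h
      by_contra hx
      exact hx ((sum_eq_zero_iff_of_nonneg fun y _ => hg y).1 h x (hfin.mem_toFinset.2 hx))
    exact ⟨μ, hμ, fun x => by simp [hg0]⟩
  · refine ⟨fun x => g x / ∑ᶠ y, g y, ⟨fun x => div_nonneg (hg x) (finsum_nonneg hg), ?_, ?_⟩,
      fun x => (mul_div_cancel₀ _ h).symm⟩
    · exact hfin.subset fun x hx hgx => hx (by simp [hgx])
    · simp only [div_eq_mul_inv, ← finsum_mul, mul_inv_cancel₀ h]

theorem sum_finsum_eq_of_sum_eq_mul {ι : Type*} [Fintype ι] {F : ι → X → ℝ}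
    (hF : ∀ k, (Function.support (F k)).Finite) {μ : X → ℝ} (hμ : IsDistr μ) {c : ℝ}
    (h : ∀ x, ∑ k, F k x = c * μ x) :
    ∑ k, ∑ᶠ x, F k x = c := by
  rw [sum_finsum_comm _ _ fun k _ => hF k, finsum_congr h, ← mul_finsum, hμ.2.2, mul_one]

end Distr

theorem common_refinement_general {X : Type*} {I J : Type*} [Fintype I] [Fintype J]
    (p : I → ℝ) (q : J → ℝ) (μ : I → X → ℝ) (ν : J → X → ℝ)
    (hp : ∀ i, 0 ≤ p i ∧ p i ≤ 1) (hq : ∀ j, 0 ≤ q j ∧ q j ≤ 1)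
    (hμ : ∀ i, IsDistr (μ i)) (hν : ∀ j, IsDistr (ν j))
    (heq : ∀ x, ∑ i, p i * μ i x = ∑ j, q j * ν j x) :
    ∃ (r : I → J → ℝ) (ρ : I → J → X → ℝ),
      (∀ i j, 0 ≤ r i j) ∧ (∀ i j, IsDistr (ρ i j)) ∧
      (∀ i, ∑ j, r i j = p i) ∧
      (∀ i x, p i * μ i x = ∑ j, r i j * ρ i j x) ∧
      (∀ j, ∑ i, r i j = q j) ∧
      (∀ j x, q j * ν j x = ∑ i, r i j * ρ i j x) := by
  set F : I → J → X → ℝ := fun i j x =>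
    productCoupling (fun i => p i * μ i x) (fun j => q j * ν j x) i j
  have hF_nonneg : ∀ i j x, 0 ≤ F i j x := fun i j x =>
    productCoupling_nonneg (fun i => mul_nonneg (hp i).1 ((hμ i).1 x))
      (fun j => mul_nonneg (hq j).1 ((hν j).1 x)) i j
  have hF_row : ∀ i x, ∑ j, F i j x = p i * μ i x := fun i x =>
    sum_productCoupling_right (fun i => mul_nonneg (hp i).1 ((hμ i).1 x)) (heq x) i
  have hF_col : ∀ j x, ∑ i, F i j x = q j * ν j x := fun j x =>
    sum_productCoupling_left (fun j => mul_nonneg (hq j).1 ((hν j).1 x)) (heq x) j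
  have hF_fin : ∀ i j, (Function.support (F i j)).Finite := fun i j =>
    (hμ i).2.1.subset <| Function.support_subset_iff'.2 fun x hx => by
      simp [F, productCoupling, Function.notMem_support.1 hx]
  choose ρ hρ using fun i j => exists_isDistr_eq_finsum_mul (hF_nonneg i j) (hF_fin i j) (hμ i)
  have hF_eq : ∀ i j x, (∑ᶠ y, F i j y) * ρ i j x = F i j x := fun i j x => ((hρ i j).2 x).symm
  refine ⟨fun i j => ∑ᶠ x, F i j x, ρ, fun i j => finsum_nonneg (hF_nonneg i j),
    fun i j => (hρ i j).1, fun i => ?_, fun i x => ?_, fun j => ?_, fun j x => ?_⟩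
  · exact sum_finsum_eq_of_sum_eq_mul (fun j => hF_fin i j) (hμ i) (hF_row i)
  · simp only [hF_eq, hF_row]
  · exact sum_finsum_eq_of_sum_eq_mul (fun i => hF_fin i j) (hν j) (hF_col j)
  · simp only [hF_eq, hF_col]

/-- common refinement of two convex decompositions:
if `⊕_{i∈I} pᵢ·μᵢ = ⊕_{j∈J} qⱼ·νⱼ` pointwise, then there are `r_{ij} ≥ 0` and
distributions `ϱ_{ij}` with `∑_j r_{ij} = pᵢ`, `pᵢ·μᵢ = ⊕_j r_{ij}·ϱ_{ij}`,
`∑_i r_{ij} = qⱼ` and `qⱼ·νⱼ = ⊕_i r_{ij}·ϱ_{ij}`. -/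
theorem common_refinement {X : Type*} {I J : Type*} [Fintype I] [Fintype J]
    (p : I → ℝ) (q : J → ℝ) (μ : I → X → ℝ) (ν : J → X → ℝ)
    (hp : ∀ i, 0 ≤ p i ∧ p i ≤ 1) (hq : ∀ j, 0 ≤ q j ∧ q j ≤ 1)
    (hp1 : ∑ i, p i = 1) (hq1 : ∑ j, q j = 1)
    (hμ : ∀ i, IsDistr (μ i)) (hν : ∀ j, IsDistr (ν j))
    (heq : ∀ x, ∑ i, p i * μ i x = ∑ j, q j * ν j x) :
    ∃ (r : I → J → ℝ) (ρ : I → J → X → ℝ),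
      (∀ i j, 0 ≤ r i j) ∧ (∀ i j, IsDistr (ρ i j)) ∧
      (∀ i, ∑ j, r i j = p i) ∧
      (∀ i x, p i * μ i x = ∑ j, r i j * ρ i j x) ∧
      (∀ j, ∑ i, r i j = q j) ∧
      (∀ j x, q j * ν j x = ∑ i, r i j * ρ i j x) :=
  common_refinement_general p q μ ν hp hq hμ hν heq
end

section
/- Fix a finite transition-closed set of states F. Suppose the partial transition relation →(α) on Distr(F) satisfies composition (Lemma composition) and decomposition (Lemma decomposition) with respect to convex combinations, and is closed under limits in the first argument fixed at Dirac distributions (i.e., if δ(E) →(α) νᵢ for all i and νᵢ → ν then δ(E) →(α) ν). Then →(α) is closed under limits in the second argument for arbitrary source distributions: if μ, ν ∈ Distr(F), (νᵢ) a sequence in Distr(F) with limit ν, and μ →(α) νᵢ for all i ∈ ℕ, then μ →(α) ν. -/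
/-- The Dirac distribution at a state. -/
def dirac {F : Type*} [DecidableEq F] (e : F) : F → ℝ := fun x => if x = e then 1 else 0

/-- over a finite set of states `F`, suppose the partial transition
relation `R` (i.e. `→(α)`) satisfies probabilistic composition and decomposition
w.r.t. convex combinations, and is closed under limits in the target when the
source is a Dirac distribution. Then `R` is closed under limits in the target for
arbitrary source distributions: if `μ R νᵢ` for all `i` and `νᵢ → ν`, then `μ R ν`. -/
theorem partial_transitions_closed_general {F : Type*} [Fintype F] [DecidableEq F]
    (R : (F → ℝ) → (F → ℝ) → Prop)
    (hcomp : ∀ (k : ℕ) (p : Fin k → ℝ) (μs νs : Fin k → F → ℝ),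
      (∀ i, 0 ≤ p i) → (∑ i, p i) = 1 → (∀ i, R (μs i) (νs i)) →
      R (fun x => ∑ i, p i * μs i x) (fun x => ∑ i, p i * νs i x))
    (hdecomp : ∀ (k : ℕ) (p : Fin k → ℝ) (μs : Fin k → F → ℝ) (μ ν : F → ℝ),
      (∀ i, 0 < p i) → (∑ i, p i) = 1 →
      (∀ x, μ x = ∑ i, p i * μs i x) → R μ ν →
      ∃ νs : Fin k → F → ℝ, (∀ i, IsDistr (νs i)) ∧ (∀ i, R (μs i) (νs i)) ∧
        ∀ x, ν x = ∑ i, p i * νs i x)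
    (hdirac : ∀ (e : F) (νs : ℕ → F → ℝ) (ν : F → ℝ),
      (∀ i, R (dirac e) (νs i)) → Filter.Tendsto νs Filter.atTop (nhds ν) →
      R (dirac e) ν)
    (μ ν : F → ℝ) (νs : ℕ → F → ℝ)
    (hμ : IsDistr μ) (hν : IsDistr ν) (hνs : ∀ i, IsDistr (νs i))
    (h : ∀ i, R μ (νs i)) (hlim : Filter.Tendsto νs Filter.atTop (nhds ν)) :
    R μ ν := by
  classical
  obtain ⟨hμ0, -, hμ1⟩ := hμ
  set s : Finset F := Finset.univ.filter (fun x => μ x ≠ 0) with hs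
  set k : ℕ := s.card with hk
  set en : Fin k → F := fun j => (s.equivFin.symm j : F) with hen
  have hen_mem : ∀ j, en j ∈ s := fun j => (s.equivFin.symm j).2
  have hen_inj : Function.Injective en := fun a b hab => by
    have := Subtype.ext hab
    simpa using s.equivFin.symm.injective this
  set p : Fin k → ℝ := fun j => μ (en j) with hp
  have hppos : ∀ j, 0 < p j := fun j => by
    have := hen_mem j
    simp only [hs, Finset.mem_filter] at this
    exact lt_of_le_of_ne (hμ0 _) (Ne.symm this.2)
  have hsum_total : ∑ x, μ x = 1 := by
    rw [← hμ1]; exact (finsum_eq_sum_of_fintype μ).symm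
  have hsum_s : ∑ x ∈ s, μ x = 1 := by
    rw [← hsum_total]
    apply Finset.sum_subset (Finset.subset_univ _)
    intro x _ hx
    simp only [hs, Finset.mem_filter, Finset.mem_univ, true_and, not_not] at hx
    exact hx
  have hpsum : ∑ j, p j = 1 := by
    rw [← hsum_s, ← Finset.sum_coe_sort s μ]
    exact Equiv.sum_comp s.equivFin.symm (fun x : s => μ (x : F))
  have hμeq : ∀ x, μ x = ∑ j, p j * dirac (en j) x := by
    intro x
    by_cases hx : x ∈ s
    · obtain ⟨j, hj⟩ : ∃ j, en j = x := ⟨s.equivFin ⟨x, hx⟩, by simp [hen]⟩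
      rw [Finset.sum_eq_single j]
      · simp [dirac, hj, p]
      · intro b _ hb
        have : x ≠ en b := fun hxe => hb (hen_inj (hj.trans hxe)).symm
        simp [dirac, this]
      · simp
    · have hx0 : μ x = 0 := by
        simp only [hs, Finset.mem_filter, Finset.mem_univ, true_and, not_not] at hx
        exact hx
      rw [hx0]
      symm
      apply Finset.sum_eq_zero
      intro j _
      have : x ≠ en j := fun hxe => hx (hxe ▸ hen_mem j)
      simp [dirac, this]
  -- decompose each νs i
  choose comp hcompd hcompR hcompeq using fun i =>
    hdecomp k p (fun j => dirac (en j)) μ (νs i) hppos hpsum hμeq (h i)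
  -- compactness
  have hbdd : ∀ i, (fun j => comp i j) ∈ Set.univ.pi
      (fun _ : Fin k => Set.univ.pi fun _ : F => Set.Icc (0:ℝ) 1) := by
    intro i
    intro j _
    intro x _
    obtain ⟨h0, -, h1⟩ := hcompd i j
    refine ⟨h0 x, ?_⟩
    have hst : ∑ y, comp i j y = 1 := by rw [← h1]; exact (finsum_eq_sum_of_fintype _).symm
    calc comp i j x ≤ ∑ y, comp i j y :=
          Finset.single_le_sum (fun y _ => h0 y) (Finset.mem_univ x)
      _ = 1 := hst
  have hcpt : IsCompact (Set.univ.pi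
      (fun _ : Fin k => Set.univ.pi fun _ : F => Set.Icc (0:ℝ) 1)) :=
    isCompact_univ_pi fun _ => isCompact_univ_pi fun _ => isCompact_Icc
  obtain ⟨L, -, φ, hφ, hLtd⟩ := hcpt.tendsto_subseq hbdd
  have hLj : ∀ j, Filter.Tendsto (fun i => comp (φ i) j) Filter.atTop (nhds (L j)) := by
    intro j
    exact ((continuous_apply j).continuousAt.tendsto.comp hLtd)
  have hRL : ∀ j, R (dirac (en j)) (L j) :=
    fun j => hdirac (en j) (fun i => comp (φ i) j) (L j) (fun i => hcompR (φ i) j) (hLj j)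
  -- ν = combination of L
  have hνeq : ∀ x, ν x = ∑ j, p j * L j x := by
    intro x
    have h1 : Filter.Tendsto (fun i => νs (φ i) x) Filter.atTop (nhds (ν x)) :=
      ((continuous_apply x).continuousAt.tendsto.comp (hlim.comp hφ.tendsto_atTop))
    have h2 : Filter.Tendsto (fun i => νs (φ i) x) Filter.atTop
        (nhds (∑ j, p j * L j x)) := by
      have : ∀ i, νs (φ i) x = ∑ j, p j * comp (φ i) j x := fun i => hcompeq (φ i) x
      simp only [this]
      apply tendsto_finset_sum
      intro j _
      exact (((continuous_apply x).continuousAt.tendsto.comp (hLj j)).const_mul (p j))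
    exact tendsto_nhds_unique h1 h2
  have := hcomp k p (fun j => dirac (en j)) L (fun j => (hppos j).le) hpsum hRL
  have hμf : μ = fun x => ∑ j, p j * dirac (en j) x := funext hμeq
  have hνf : ν = fun x => ∑ j, p j * L j x := funext hνeq
  rw [hμf, hνf]
  exact this
end

section
/- Fix a finite transition-closed set of states F. Suppose →(α) ⊆ Distr(F) × Distr(F) is a relation closed under convex decomposition of the source (if μ →(α) ν and μ = (1−r)μ₁ ⊕ rμ₂ then ν = (1−r)ν₁ ⊕ rν₂ with μ₁ →(α) ν₁, μ₂ →(α) ν₂) and closed under limits in the target (if μ →(α) νᵢ for all i and νᵢ → ν then μ →(α) ν). Then →(α) is jointly closed under limits: if (μᵢ), (νᵢ) are sequences in Distr(F) with μᵢ → μ, νᵢ → ν, and μᵢ →(α) νᵢ for all i ∈ ℕ, then μ →(α) ν. -/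
/-!
Write `μᵢ = (1 - rᵢ) μ + rᵢ μ″ᵢ`, where `rᵢ` is the total relative shortfall of `μᵢ` below `μ`
(capped at `1`); it depends continuously on `μᵢ`, hence `rᵢ → 0`. Decomposing the transition
`μᵢ →(α) νᵢ` along this splitting gives `μ →(α) ν′ᵢ` with `νᵢ = (1 - rᵢ) ν′ᵢ + rᵢ ν″ᵢ`, so
`‖ν′ᵢ - νᵢ‖ ≤ 2 rᵢ → 0` and `ν′ᵢ → ν`; closure in the target then gives `μ →(α) ν`.
-/

namespace IsDistr

variable {X : Type*} [Fintype X] {μ μ' : X → ℝ}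

lemma sum_eq_one (h : IsDistr μ) : ∑ x, μ x = 1 := by
  rw [← finsum_eq_sum_of_fintype]
  exact h.2.2

lemma norm_le_one (h : IsDistr μ) : ‖μ‖ ≤ 1 := by
  refine (pi_norm_le_iff_of_nonneg zero_le_one).mpr fun x => ?_
  rw [Real.norm_of_nonneg (h.1 x), ← h.sum_eq_one]
  exact Finset.single_le_sum (fun y _ => h.1 y) (Finset.mem_univ x)

/-- The witness is the excess `(μ' - (1 - r) μ) / r`; for `r = 0` the hypothesis forces
`μ' = μ`. -/
lemma exists_eq_convex_combination (hμ : IsDistr μ) (hμ' : IsDistr μ') {r : ℝ}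
    (hr₀ : 0 ≤ r) (hle : ∀ x, (1 - r) * μ x ≤ μ' x) :
    ∃ μ₂, IsDistr μ₂ ∧ ∀ x, μ' x = (1 - r) * μ x + r * μ₂ x := by
  rcases hr₀.eq_or_lt with rfl | hr
  · have hsum : ∑ x, (μ' x - μ x) = 0 := by
      rw [Finset.sum_sub_distrib, hμ'.sum_eq_one, hμ.sum_eq_one, sub_self]
    have heq := (Finset.sum_eq_zero_iff_of_nonneg fun x _ => by linarith [hle x]).mp hsum
    exact ⟨μ, hμ, fun x => by linarith [heq x (Finset.mem_univ x)]⟩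
  refine ⟨fun x => (μ' x - (1 - r) * μ x) / r,
    ⟨fun x => div_nonneg (by linarith [hle x]) hr.le, Set.toFinite _, ?_⟩,
    fun x => by field_simp; ring⟩
  rw [finsum_eq_sum_of_fintype, ← Finset.sum_div, Finset.sum_sub_distrib, ← Finset.mul_sum,
    hμ'.sum_eq_one, hμ.sum_eq_one]
  field_simp
  ring

end IsDistr

section Defect

variable {X : Type*} [Fintype X]

/-- Points with `μ x = 0` contribute `0` (division by zero). -/
noncomputable def defect (μ μ' : X → ℝ) : ℝ :=
  ∑ x, max 0 (μ x - μ' x) / μ x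

lemma defect_self (μ : X → ℝ) : defect μ μ = 0 := by
  simp [defect]

lemma continuous_defect (μ : X → ℝ) : Continuous (defect μ) := by
  unfold defect
  fun_prop

lemma defect_nonneg {μ : X → ℝ} (hμ : ∀ x, 0 ≤ μ x) (μ' : X → ℝ) : 0 ≤ defect μ μ' :=
  Finset.sum_nonneg fun x _ => div_nonneg (le_max_left _ _) (hμ x)

lemma one_sub_min_defect_mul_le {μ μ' : X → ℝ} (hμ : ∀ x, 0 ≤ μ x) (hμ' : ∀ x, 0 ≤ μ' x)
    (x : X) : (1 - min 1 (defect μ μ')) * μ x ≤ μ' x := by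
  rcases min_cases 1 (defect μ μ') with ⟨hmin, -⟩ | ⟨hmin, -⟩
  · simpa [hmin] using hμ' x
  rw [hmin]
  rcases (hμ x).eq_or_lt with hx | hx
  · simpa [← hx] using hμ' x
  have hterm : max 0 (μ x - μ' x) / μ x ≤ defect μ μ' :=
    Finset.single_le_sum (f := fun y => max 0 (μ y - μ' y) / μ y)
      (fun y _ => div_nonneg (le_max_left _ _) (hμ y)) (Finset.mem_univ x)
  rw [div_le_iff₀ hx] at hterm
  nlinarith [le_max_right 0 (μ x - μ' x)]

end Defect

lemma IsDistr.exists_convex_decomposition_of_tendsto {X : Type*} [Fintype X]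
    {μs : ℕ → X → ℝ} {μ : X → ℝ} (hμs : ∀ i, IsDistr (μs i)) (hμ : IsDistr μ)
    (hlim : Filter.Tendsto μs Filter.atTop (nhds μ)) :
    ∃ (r : ℕ → ℝ) (μ₂ : ℕ → X → ℝ), (∀ i, 0 ≤ r i ∧ r i ≤ 1) ∧
      Filter.Tendsto r Filter.atTop (nhds 0) ∧
      ∀ i, IsDistr (μ₂ i) ∧ ∀ x, μs i x = (1 - r i) * μ x + r i * μ₂ i x := by
  set r : ℕ → ℝ := fun i => min 1 (defect μ (μs i))
  have hr : ∀ i, 0 ≤ r i ∧ r i ≤ 1 := fun i =>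
    ⟨le_min zero_le_one (defect_nonneg hμ.1 _), min_le_left _ _⟩
  have hrlim : Filter.Tendsto r Filter.atTop (nhds 0) := by
    have hcont : Continuous fun μ' => min 1 (defect μ μ') :=
      continuous_const.min (continuous_defect μ)
    have := (hcont.tendsto μ).comp hlim
    rwa [defect_self, min_eq_right zero_le_one] at this
  choose μ₂ hμ₂ using fun i => hμ.exists_eq_convex_combination (hμs i) (hr i).1
    (one_sub_min_defect_mul_le hμ.1 (hμs i).1)
  exact ⟨r, μ₂, hr, hrlim, hμ₂⟩

lemma tendsto_of_convex_combination {ι E : Type*} [NormedAddCommGroup E] [NormedSpace ℝ E]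
    {l : Filter ι} {νs ν₁ ν₂ : ι → E} {ν : E} {r : ι → ℝ} {C : ℝ}
    (hνs : ∀ i, νs i = (1 - r i) • ν₁ i + r i • ν₂ i) (hbound : ∀ i, ‖ν₁ i - ν₂ i‖ ≤ C)
    (hr : Filter.Tendsto r l (nhds 0)) (hlim : Filter.Tendsto νs l (nhds ν)) :
    Filter.Tendsto ν₁ l (nhds ν) := by
  have hsmall : Filter.Tendsto (fun i => r i • (ν₁ i - ν₂ i)) l (nhds 0) :=
    hr.zero_smul_isBoundedUnder_le (Filter.isBoundedUnder_of ⟨C, hbound⟩)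
  refine (add_zero ν ▸ hlim.add hsmall).congr fun i => ?_
  rw [hνs i]
  module

theorem partial_transitions_jointly_closed_general {F : Type*} [Fintype F]
    (R : (F → ℝ) → (F → ℝ) → Prop)
    (hdec : ∀ (μ ν μ₁ μ₂ : F → ℝ) (r : ℝ), 0 ≤ r → r ≤ 1 →
      IsDistr μ₁ → IsDistr μ₂ → R μ ν →
      (∀ x, μ x = (1 - r) * μ₁ x + r * μ₂ x) →
      ∃ ν₁ ν₂ : F → ℝ, IsDistr ν₁ ∧ IsDistr ν₂ ∧ R μ₁ ν₁ ∧ R μ₂ ν₂ ∧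
        ∀ x, ν x = (1 - r) * ν₁ x + r * ν₂ x)
    (htarget : ∀ (μ : F → ℝ) (νs : ℕ → F → ℝ) (ν : F → ℝ),
      (∀ i, R μ (νs i)) → Filter.Tendsto νs Filter.atTop (nhds ν) → R μ ν)
    (μs νs : ℕ → F → ℝ) (μ ν : F → ℝ)
    (hd : ∀ i, IsDistr (μs i) ∧ IsDistr (νs i)) (hμ : IsDistr μ)
    (hμlim : Filter.Tendsto μs Filter.atTop (nhds μ))
    (hνlim : Filter.Tendsto νs Filter.atTop (nhds ν))
    (hR : ∀ i, R (μs i) (νs i)) :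
    R μ ν := by
  obtain ⟨r, μ₂, hr, hrlim, hμ₂⟩ :=
    IsDistr.exists_convex_decomposition_of_tendsto (fun i => (hd i).1) hμ hμlim
  choose ν₁ ν₂ hν₁ hν₂ hRν₁ _ hνs using fun i =>
    hdec (μs i) (νs i) μ (μ₂ i) (r i) (hr i).1 (hr i).2 hμ (hμ₂ i).1 (hR i) (hμ₂ i).2
  have hbound : ∀ i, ‖ν₁ i - ν₂ i‖ ≤ 2 := fun i =>
    (norm_sub_le _ _).trans (by linarith [(hν₁ i).norm_le_one, (hν₂ i).norm_le_one])
  refine htarget μ ν₁ ν hRν₁ (tendsto_of_convex_combination (fun i => ?_) hbound hrlim hνlim)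
  ext x
  simp [hνs i x]

/-- over a finite set of states `F`, suppose the relation `R`
(i.e. `→(α)`) on distributions is closed under binary convex decomposition of the
source and closed under limits in the target. Then `R` is jointly closed under
limits: `μᵢ → μ`, `νᵢ → ν` and `μᵢ R νᵢ` for all `i` imply `μ R ν`. -/
theorem partial_transitions_jointly_closed {F : Type*} [Fintype F]
    (R : (F → ℝ) → (F → ℝ) → Prop)
    (hdec : ∀ (μ ν μ₁ μ₂ : F → ℝ) (r : ℝ), 0 ≤ r → r ≤ 1 →
      IsDistr μ₁ → IsDistr μ₂ → R μ ν →
      (∀ x, μ x = (1 - r) * μ₁ x + r * μ₂ x) →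
      ∃ ν₁ ν₂ : F → ℝ, IsDistr ν₁ ∧ IsDistr ν₂ ∧ R μ₁ ν₁ ∧ R μ₂ ν₂ ∧
        ∀ x, ν x = (1 - r) * ν₁ x + r * ν₂ x)
    (htarget : ∀ (μ : F → ℝ) (νs : ℕ → F → ℝ) (ν : F → ℝ),
      (∀ i, R μ (νs i)) → Filter.Tendsto νs Filter.atTop (nhds ν) → R μ ν)
    (μs νs : ℕ → F → ℝ) (μ ν : F → ℝ)
    (hd : ∀ i, IsDistr (μs i) ∧ IsDistr (νs i)) (hμ : IsDistr μ) (hν : IsDistr ν)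
    (hμlim : Filter.Tendsto μs Filter.atTop (nhds μ))
    (hνlim : Filter.Tendsto νs Filter.atTop (nhds ν))
    (hR : ∀ i, R (μs i) (νs i)) :
    R μ ν :=
  partial_transitions_jointly_closed_general R hdec htarget μs νs μ ν hd hμ hμlim hνlim hR
end

section
/- Fix a finite set F and a relation →(τ) on Distr(F) that is reflexive and jointly closed under limits (if μᵢ → μ, νᵢ → ν, and μᵢ →(τ) νᵢ for all i, then μ →(τ) ν). Define μ ⇒ₙ ν iff there exist η₀,…,ηₙ with μ = η₀ →(τ) η₁ →(τ) … →(τ) ηₙ = ν. Then for every n ∈ ℕ, the relation ⇒ₙ is jointly closed under limits: if μᵢ → μ, νᵢ → ν, and μᵢ ⇒ₙ νᵢ for all i ∈ ℕ, then μ ⇒ₙ ν. -/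
/-- `μ ⇒ₙ ν`: there is a chain of `n` `R`-steps from `μ` to `ν`. -/
def StepsN {D : Type*} (R : D → D → Prop) : ℕ → D → D → Prop
  | 0, μ, ν => μ = ν
  | n + 1, μ, ν => ∃ η, R μ η ∧ StepsN R n η ν

/-- over a finite set `F`, let `R` (i.e. `→(τ)`) be a reflexive
relation on `Distr(F)` that is jointly closed under limits. Then for every `n`,
the `n`-step relation `⇒ₙ` is jointly closed under limits. -/
theorem bounded_weak_transitions_closed {F : Type*} [Fintype F]
    (R : (F → ℝ) → (F → ℝ) → Prop)
    (hdom : ∀ μ ν, R μ ν → IsDistr μ ∧ IsDistr ν)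
    (hrefl : ∀ μ, IsDistr μ → R μ μ)
    (hclosed : ∀ (μs νs : ℕ → F → ℝ) (μ ν : F → ℝ),
      Filter.Tendsto μs Filter.atTop (nhds μ) →
      Filter.Tendsto νs Filter.atTop (nhds ν) →
      (∀ i, R (μs i) (νs i)) → R μ ν) :
    ∀ (n : ℕ) (μs νs : ℕ → F → ℝ) (μ ν : F → ℝ),
      Filter.Tendsto μs Filter.atTop (nhds μ) →
      Filter.Tendsto νs Filter.atTop (nhds ν) →
      (∀ i, StepsN R n (μs i) (νs i)) → StepsN R n μ ν := by
  have hle1 : ∀ (μ : F → ℝ), IsDistr μ → ∀ x, μ x ≤ 1 := by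
    intro μ hμ x
    have hs := hμ.2.2
    rw [finsum_eq_sum_of_fintype] at hs
    exact hs ▸ Finset.single_le_sum (fun y _ => hμ.1 y) (Finset.mem_univ x)
  intro n
  induction n with
  | zero =>
    intro μs νs μ ν hμ hν hst
    simp only [StepsN] at hst ⊢
    have : μs = νs := funext hst
    exact tendsto_nhds_unique hμ (this ▸ hν)
  | succ n ih =>
    intro μs νs μ ν hμ hν hst
    simp only [StepsN] at hst ⊢
    choose η hR hS using hst
    have hK : IsCompact (Set.pi Set.univ fun _ : F => Set.Icc (0:ℝ) 1) :=
      isCompact_univ_pi fun _ => isCompact_Icc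
    have hmem : ∀ i, η i ∈ Set.pi Set.univ (fun _ : F => Set.Icc (0:ℝ) 1) := by
      intro i x _
      have hd := (hdom _ _ (hR i)).2
      exact ⟨hd.1 x, hle1 _ hd x⟩
    obtain ⟨ηL, -, φ, hφ, hηlim⟩ := hK.tendsto_subseq hmem
    exact ⟨ηL,
      hclosed (μs ∘ φ) (η ∘ φ) μ ηL (hμ.comp hφ.tendsto_atTop) hηlim (fun i => hR (φ i)),
      ih (η ∘ φ) (νs ∘ φ) ηL ν hηlim (hν.comp hφ.tendsto_atTop) (fun i => hS (φ i))⟩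
end

section
/- Let E be a set, ≈ an equivalence relation on E, and μ, ν finitely supported probability distributions on E such that μ[C] = ν[C] for every equivalence class C of ≈ (where μ[C] = ∑_{x∈C} μ(x)). Then there exist a finite index set K, probabilities r_k ≥ 0 summing to 1, and elements x_k, y_k ∈ E with x_k ≈ y_k for all k ∈ K, such that μ = ⊕_{k∈K} r_k·δ(x_k) and ν = ⊕_{k∈K} r_k·δ(y_k). -/
lemma finsum_mem_eq_filter_sum {X : Type*} (f : X → ℝ)
    (hf : (Function.support f).Finite) (A : Set X) [DecidablePred (· ∈ A)] :
    (∑ᶠ x ∈ A, f x) = ∑ x ∈ hf.toFinset.filter (· ∈ A), f x := by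
  have h1 : (A ∩ Function.support f).Finite := hf.inter_of_right A
  rw [finsum_mem_eq_sum f h1]
  apply Finset.sum_congr _ (fun _ _ => rfl)
  ext x
  simp [Set.mem_inter_iff, Function.mem_support, and_comm]

/-- coupling construction: if two finitely supported distributions
`μ, ν` on `E` assign the same probability `μ[C] = ν[C]` to every equivalence
class `C` of `≈`, then they can be written as matched convex combinations of
Dirac distributions, `μ = ⊕_k r_k·δ(x_k)` and `ν = ⊕_k r_k·δ(y_k)`
with `x_k ≈ y_k` for all `k`. -/
theorem class_masses_to_coupling {E : Type*} [DecidableEq E]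
    (e : E → E → Prop) (he : Equivalence e)
    (μ ν : E → ℝ) (hμ : IsDistr μ) (hν : IsDistr ν)
    (h : ∀ z : E, (∑ᶠ x ∈ {x | e x z}, μ x) = ∑ᶠ x ∈ {x | e x z}, ν x) :
    ∃ (k : ℕ) (r : Fin k → ℝ) (xs ys : Fin k → E),
      (∀ i, 0 ≤ r i) ∧ (∑ i, r i) = 1 ∧ (∀ i, e (xs i) (ys i)) ∧
      (∀ z, μ z = ∑ i, if xs i = z then r i else 0) ∧
      (∀ z, ν z = ∑ i, if ys i = z then r i else 0) := by
  classical
  obtain ⟨hμ0, hμfin, hμ1⟩ := hμ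
  obtain ⟨hν0, hνfin, hν1⟩ := hν
  set S := hμfin.toFinset with hS
  set T := hνfin.toFinset with hT
  set M : E → ℝ := fun z => ∑ y ∈ T.filter (fun y => e y z), ν y with hMdef
  -- class masses agree
  have hclass : ∀ z, (∑ x ∈ S.filter (fun x => e x z), μ x) = M z := by
    intro z
    have h1 := finsum_mem_eq_filter_sum μ hμfin {x | e x z}
    have h2 := finsum_mem_eq_filter_sum ν hνfin {x | e x z}
    have := h z
    rw [h1, h2] at this
    simpa using this
  have hM0 : ∀ z, 0 ≤ M z := fun z => Finset.sum_nonneg (fun y _ => hν0 y)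
  have hMpos : ∀ x ∈ S, 0 < M x := by
    intro x hx
    rw [← hclass x]
    have hxm : x ∈ S.filter (fun y => e y x) := by
      simp [Finset.mem_filter, hx, he.refl x]
    have hμx : 0 < μ x := by
      have := (hμfin.mem_toFinset).mp hx
      exact lt_of_le_of_ne (hμ0 x) (Ne.symm this)
    calc (0:ℝ) < μ x := hμx
      _ ≤ _ := Finset.single_le_sum (fun y _ => hμ0 y) hxm
  -- M constant on classes
  have hMconst : ∀ x z, e x z → M x = M z := by
    intro x z hxz
    apply Finset.sum_congr _ (fun _ _ => rfl)
    ext y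
    simp only [Finset.mem_filter, and_congr_right_iff]
    exact fun _ => ⟨fun hyx => he.trans hyx hxz, fun hyz => he.trans hyz (he.symm hxz)⟩
  set K := (S ×ˢ T).filter (fun p => e p.1 p.2) with hK
  set w : E × E → ℝ := fun p => μ p.1 * ν p.2 / M p.1 with hw
  have hw0 : ∀ p, 0 ≤ w p := fun p =>
    div_nonneg (mul_nonneg (hμ0 _) (hν0 _)) (hM0 _)
  -- row sums
  have row : ∀ z, (∑ p ∈ K, if p.1 = z then w p else 0) = μ z := by
    intro z
    rw [hK, Finset.sum_filter, Finset.sum_product]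
    by_cases hz : z ∈ S
    · rw [Finset.sum_eq_single z]
      · have : (∑ y ∈ T, if e z y then if (z = z) then w (z, y) else 0 else 0)
            = ∑ y ∈ T.filter (fun y => e y z), μ z * ν y / M z := by
          rw [Finset.sum_filter]
          apply Finset.sum_congr rfl
          intro y _
          by_cases hy : e y z
          · simp [hy, he.symm hy, hw]
          · have : ¬ e z y := fun hc => hy (he.symm hc)
            simp [hy, this]
        rw [this, ← Finset.sum_div, ← Finset.mul_sum]
        rw [show (∑ y ∈ T.filter (fun y => e y z), ν y) = M z from rfl]
        field_simp [(hMpos z hz).ne']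
      · intro x _ hxz
        apply Finset.sum_eq_zero
        intro y _
        simp [hxz]
      · intro hzs; exact absurd hz hzs
    · have hμz : μ z = 0 := by
        by_contra hc
        exact hz (hμfin.mem_toFinset.mpr hc)
      rw [hμz]
      apply Finset.sum_eq_zero
      intro x hx
      apply Finset.sum_eq_zero
      intro y _
      by_cases hxz : x = z
      · exact absurd (hxz ▸ hx) hz
      · simp [hxz]
  -- column sums
  have col : ∀ z, (∑ p ∈ K, if p.2 = z then w p else 0) = ν z := by
    intro z
    rw [hK, Finset.sum_filter, Finset.sum_product_right]
    by_cases hz : z ∈ T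
    · rw [Finset.sum_eq_single z]
      · have : (∑ x ∈ S, if e x z then if (z = z) then w (x, z) else 0 else 0)
            = ∑ x ∈ S.filter (fun x => e x z), μ x * ν z / M z := by
          rw [Finset.sum_filter]
          apply Finset.sum_congr rfl
          intro x _
          by_cases hx : e x z
          · simp [hx, hw, hMconst x z hx]
          · simp [hx]
        rw [this, ← Finset.sum_div, ← Finset.sum_mul, hclass z]
        have hMz : 0 < M z := by
          calc (0:ℝ) < ν z := lt_of_le_of_ne (hν0 z) (Ne.symm (hνfin.mem_toFinset.mp hz))
            _ ≤ M z :=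
                Finset.single_le_sum (fun y _ => hν0 y)
                  (by simp [Finset.mem_filter, hz, he.refl z])
        rw [← hclass z] at hMz ⊢
        field_simp [hMz.ne']
      · intro y _ hyz
        apply Finset.sum_eq_zero
        intro x _
        simp [hyz]
      · intro hzt; exact absurd hz hzt
    · have hνz : ν z = 0 := by
        by_contra hc
        exact hz (hνfin.mem_toFinset.mpr hc)
      rw [hνz]
      apply Finset.sum_eq_zero
      intro y hy
      apply Finset.sum_eq_zero
      intro x _
      by_cases hyz : y = z
      · exact absurd (hyz ▸ hy) hz
      · simp [hyz]
  -- total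
  have total : (∑ p ∈ K, w p) = 1 := by
    have : (∑ p ∈ K, w p) = ∑ x ∈ S, ∑ p ∈ K, if p.1 = x then w p else 0 := by
      rw [Finset.sum_comm]
      apply Finset.sum_congr rfl
      intro p hp
      have hp1 : p.1 ∈ S := by
        rw [hK] at hp
        exact (Finset.mem_product.mp (Finset.mem_filter.mp hp).1).1
      simp [Finset.sum_ite_eq, hp1]
    rw [this]
    have : (∑ x ∈ S, ∑ p ∈ K, if p.1 = x then w p else 0) = ∑ x ∈ S, μ x :=
      Finset.sum_congr rfl (fun x _ => row x)
    rw [this, ← finsum_eq_sum μ hμfin]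
    exact hμ1
  -- package into Fin k
  refine ⟨K.card, fun i => w (K.equivFin.symm i), fun i => (K.equivFin.symm i).1.1,
    fun i => (K.equivFin.symm i).1.2, fun i => hw0 _, ?_, ?_, ?_, ?_⟩
  · rw [Fintype.sum_equiv K.equivFin.symm _ (fun p : K => w p.1) (fun i => rfl),
      Finset.sum_coe_sort K w]
    exact total
  · intro i
    have := (K.equivFin.symm i).2
    exact (Finset.mem_filter.mp this).2
  · intro z
    rw [Fintype.sum_equiv K.equivFin.symm _
        (fun p : K => if (p : E × E).1 = z then w p else 0) (fun i => rfl),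
      Finset.sum_coe_sort K (fun p => if p.1 = z then w p else 0)]
    exact (row z).symm
  · intro z
    rw [Fintype.sum_equiv K.equivFin.symm _
        (fun p : K => if (p : E × E).2 = z then w p else 0) (fun i => rfl),
      Finset.sum_coe_sort K (fun p => if p.2 = z then w p else 0)]
    exact (col z).symm
end
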